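/- Let M ≥ 2 be an integer, D > 0, h > 0, ε > 0, and let A be the (M−1)×(M−1) real matrix (D/h²)·tridiag(1, −2, 1) (i.e. A has −2D/h² on the diagonal and D/h² on the sub- and super-diagonals). Let ξ_1, …, ξ_{M−1} be reals with υ_LB ≤ ξ_i ≤ υ_UB for all i, and let B := ε·diag(1 − 2ξ_1, …, 1 − 2ξ_{M−1}). Then every element w of the set W_1(−A, B) := {⟨v, B v⟩ : v ∈ ℂ^{M−1}, ⟨v, −A v⟩ = 1} is a real number, and there exists ℓ with (2D/h²)(1 + cos((M−1)π/M)) ≤ ℓ ≤ (2D/h²)(1 + cos(π/M)) such that (ε/ℓ)(1 − 2υ_UB) ≤ w ≤ (ε/ℓ)(1 − 2υ_LB). -/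

import Mathlib

/-!
Padding `v` with zeros at the boundary nodes `0` and `M`, summation by parts turns `⟨v, -Av⟩` into
`D/h²` times the discrete Dirichlet energy `∑ₖ |vₖ₊₁ - vₖ|²`. The discrete Wirtinger inequalities
`2(1 - cos(π/M)) ‖v‖² ≤ ∑ₖ |vₖ₊₁ - vₖ|² ≤ 2(1 + cos(π/M)) ‖v‖²` therefore put `ℓ := 1/‖v‖²` in the
stated interval once `⟨v, -Av⟩ = 1` (note `cos((M-1)π/M) = -cos(π/M)`). The lower one follows from
the ground-state substitution `vₖ = sin(kπ/M) wₖ`, the upper one from the lower one applied to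
`(-1)ᵏ vₖ`. Since `B` is real diagonal, `⟨v, Bv⟩ = ε ∑ᵢ (1 - 2ξᵢ)|vᵢ|²` is real and lies between
`ε(1 - 2υ_UB)‖v‖² = (ε/ℓ)(1 - 2υ_UB)` and `(ε/ℓ)(1 - 2υ_LB)`.
-/

open Matrix

/-- The finite-difference matrix `(D/h²)·tridiag(1, −2, 1)` of size `(M−1)×(M−1)`. -/
noncomputable def fdMatrix (M : ℕ) (D h : ℝ) : Matrix (Fin (M - 1)) (Fin (M - 1)) ℝ :=
  Matrix.of fun i j =>
    (D / h ^ 2) *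
      (if (i : ℕ) = (j : ℕ) then -2
       else if (i : ℕ) + 1 = (j : ℕ) ∨ (j : ℕ) + 1 = (i : ℕ) then 1 else 0)

open Finset Complex ComplexConjugate

theorem sum_range_sub_mul_sub {R : Type*} [CommRing R] (N : ℕ) (a b : ℕ → R)
    (hb₀ : b 0 = 0) (hbN : b N = 0) :
    ∑ k ∈ range N, (a (k + 1) - a k) * (b (k + 1) - b k) =
      ∑ k ∈ range N, (2 * a (k + 1) - a (k + 2) - a k) * b (k + 1) := by
  rw [← sub_eq_zero, ← sum_sub_distrib]
  have htel := sum_range_sub (fun k => (a (k + 1) - a k) * b k) N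
  simp only [hb₀, hbN, mul_zero, sub_zero] at htel
  exact (sum_congr rfl fun k _ => by ring).trans htel

theorem normSq_ofReal_mul_sub_ofReal_mul (a b : ℝ) (z w : ℂ) :
    normSq (a * z - b * w) =
      a * b * normSq (z - w) + (a - b) * (a * normSq z - b * normSq w) := by
  simp only [normSq_apply, sub_re, sub_im, mul_re, mul_im, ofReal_re, ofReal_im]
  ring

noncomputable def dirichletEnergy (N : ℕ) (V : ℕ → ℂ) : ℝ :=
  ∑ k ∈ range N, normSq (V (k + 1) - V k)

/-- Discrete Picone identity: writing `V = u W` splits the energy into a nonnegative part and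
a part that summation by parts turns into `μ ∑ |V|²`. -/
theorem mul_sum_normSq_le_dirichletEnergy {N : ℕ} {u : ℕ → ℝ} {μ : ℝ}
    (hu : ∀ k ≤ N, 0 ≤ u k) (hu_ne : ∀ k, 0 < k → k < N → u k ≠ 0)
    (hμ : ∀ k < N, 2 * u (k + 1) - u (k + 2) - u k = μ * u (k + 1))
    {V : ℕ → ℂ} (hV₀ : V 0 = 0) (hVN : V N = 0) :
    μ * ∑ k ∈ range N, normSq (V (k + 1)) ≤ dirichletEnergy N V := by
  set W : ℕ → ℂ := fun k => V k / u k
  set g : ℕ → ℝ := fun k => u k * normSq (W k)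
  have hVW : ∀ k ≤ N, V k = u k * W k := by
    intro k hk
    by_cases h : u k = 0
    · obtain rfl | rfl : k = 0 ∨ k = N := by
        by_contra! h'
        exact hu_ne k (by omega) (by omega) h
      all_goals simp [h, hV₀, hVN]
    · exact (mul_div_cancel₀ _ (ofReal_ne_zero.2 h)).symm
  have hsplit : dirichletEnergy N V =
      ∑ k ∈ range N, u k * u (k + 1) * normSq (W (k + 1) - W k) +
        ∑ k ∈ range N, (u (k + 1) - u k) * (g (k + 1) - g k) := by
    rw [dirichletEnergy, ← sum_add_distrib]
    refine sum_congr rfl fun k hk => ?_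
    have hk := mem_range.1 hk
    rw [hVW (k + 1) hk, hVW k hk.le, normSq_ofReal_mul_sub_ofReal_mul]
    ring
  have hparts : ∑ k ∈ range N, (u (k + 1) - u k) * (g (k + 1) - g k) =
      μ * ∑ k ∈ range N, normSq (V (k + 1)) := by
    rw [sum_range_sub_mul_sub N u g (by simp [g, W, hV₀]) (by simp [g, W, hVN]), mul_sum]
    refine sum_congr rfl fun k hk => ?_
    have hk := mem_range.1 hk
    rw [hμ k hk, hVW (k + 1) hk, normSq_mul, normSq_ofReal]
    ring
  have hnonneg : 0 ≤ ∑ k ∈ range N, u k * u (k + 1) * normSq (W (k + 1) - W k) :=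
    sum_nonneg fun k hk => by
      have hk := mem_range.1 hk
      exact mul_nonneg (mul_nonneg (hu k hk.le) (hu (k + 1) hk)) (normSq_nonneg _)
  linarith

theorem two_mul_one_sub_cos_mul_sum_le_dirichletEnergy {N : ℕ} {V : ℕ → ℂ}
    (hV₀ : V 0 = 0) (hVN : V N = 0) :
    2 * (1 - Real.cos (Real.pi / N)) * ∑ k ∈ range N, normSq (V (k + 1)) ≤
      dirichletEnergy N V := by
  rcases Nat.eq_zero_or_pos N with rfl | hN
  · simp [dirichletEnergy]
  set θ := Real.pi / N
  have hNθ : (N : ℝ) * θ = Real.pi := mul_div_cancel₀ _ (by positivity)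
  have hθ : 0 < θ := by positivity
  -- the ground state `sin (k π / N)` of the discrete Dirichlet Laplacian
  refine mul_sum_normSq_le_dirichletEnergy (u := fun k => Real.sin (k * θ)) (fun k hk => ?_)
    (fun k hk₀ hkN => ?_) (fun k _ => ?_) hV₀ hVN
  · refine Real.sin_nonneg_of_nonneg_of_le_pi (by positivity) ?_
    rw [← hNθ]
    gcongr
  · refine (Real.sin_pos_of_pos_of_lt_pi (by positivity) ?_).ne'
    rw [← hNθ]
    gcongr
  · have h₂ : ((k + 2 : ℕ) : ℝ) * θ = (k + 1 : ℕ) * θ + θ := by push_cast; ring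
    have h₀ : (k : ℝ) * θ = (k + 1 : ℕ) * θ - θ := by push_cast; ring
    rw [h₂, h₀, Real.sin_add, Real.sin_sub]
    ring

theorem dirichletEnergy_le_two_mul_one_add_cos_mul_sum {N : ℕ} {V : ℕ → ℂ}
    (hV₀ : V 0 = 0) (hVN : V N = 0) :
    dirichletEnergy N V ≤
      2 * (1 + Real.cos (Real.pi / N)) * ∑ k ∈ range N, normSq (V (k + 1)) := by
  -- the lower bound for the alternating sequence `(-1)ᵏ V k` bounds `∑ |V (k + 1) + V k|²` below
  set V' : ℕ → ℂ := fun k => (-1) ^ k * V k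
  have hlow := two_mul_one_sub_cos_mul_sum_le_dirichletEnergy (N := N) (V := V')
    (by simp [V', hV₀]) (by simp [V', hVN])
  have hnormSq : ∀ k, normSq (V' k) = normSq (V k) := fun k => by simp [V', normSq_mul]
  have hdiff : ∀ k, normSq (V' (k + 1) - V' k) = normSq (V (k + 1) + V k) := fun k => by
    have : V' (k + 1) - V' k = -((-1) ^ k * (V (k + 1) + V k)) := by simp only [V', pow_succ]; ring
    simp [this, normSq_mul]
  have hshift : ∑ k ∈ range N, normSq (V k) = ∑ k ∈ range N, normSq (V (k + 1)) := by
    have h₁ := sum_range_succ (fun k => normSq (V k)) N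
    have h₂ := sum_range_succ' (fun k => normSq (V k)) N
    simp only [hV₀, hVN, map_zero, add_zero] at h₁ h₂
    rw [← h₁, h₂]
  have hpar : dirichletEnergy N V + dirichletEnergy N V' =
      2 * ∑ k ∈ range N, normSq (V (k + 1)) + 2 * ∑ k ∈ range N, normSq (V k) := by
    simp only [dirichletEnergy, hdiff, mul_sum, ← sum_add_distrib]
    refine sum_congr rfl fun k _ => ?_
    rw [normSq_sub, normSq_add]
    ring
  simp only [hnormSq] at hlow
  linarith

/-- The vector `v` placed on the interior nodes `1, …, n` of the grid `0, 1, …, n + 1`. -/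
noncomputable def padZero {n : ℕ} (v : Fin n → ℂ) : ℕ → ℂ :=
  Function.extend (fun i : Fin n => (i : ℕ) + 1) v 0

section padZero

variable {n : ℕ} (v : Fin n → ℂ)

theorem padZero_val_add_one (i : Fin n) : padZero v (i + 1) = v i :=
  ((add_left_injective 1).comp Fin.val_injective).extend_apply v 0 i

theorem padZero_eq_zero {m : ℕ} (hm : m = 0 ∨ n < m) : padZero v m = 0 :=
  Function.extend_apply' _ _ _ fun ⟨i, hi⟩ => by omega

theorem sum_ite_val_add_one_eq_padZero (m : ℕ) :
    ∑ j : Fin n, (if (j : ℕ) + 1 = m then v j else 0) = padZero v m := by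
  by_cases hm : m = 0 ∨ n < m
  · rw [padZero_eq_zero v hm]
    exact sum_eq_zero fun j _ => if_neg (by omega)
  · obtain ⟨i, rfl⟩ : ∃ i : Fin n, (i : ℕ) + 1 = m :=
      ⟨⟨m - 1, by omega⟩, Nat.sub_add_cancel (by omega)⟩
    simp [padZero_val_add_one, Fin.val_inj]

theorem sum_range_normSq_padZero {N : ℕ} (hN : n ≤ N) :
    ∑ k ∈ range N, normSq (padZero v (k + 1)) = ∑ i, normSq (v i) := calc
  _ = ∑ k ∈ range n, normSq (padZero v (k + 1)) := by
    refine (sum_subset (range_subset_range.2 hN) fun k _ hk => ?_).symm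
    rw [padZero_eq_zero v (by simp only [mem_range] at hk; omega), map_zero]
  _ = ∑ i, normSq (v i) := by
    rw [← Fin.sum_univ_eq_sum_range (fun k => normSq (padZero v (k + 1)))]
    simp only [padZero_val_add_one]

end padZero

theorem neg_fdMatrix_mulVec_apply (M : ℕ) (D h : ℝ) (v : Fin (M - 1) → ℂ) (i : Fin (M - 1)) :
    ((-fdMatrix M D h).map ofReal *ᵥ v) i =
      (D / h ^ 2 : ℝ) * (2 * padZero v (i + 1) - padZero v (i + 2) - padZero v i) := by
  have hentry : ∀ j : Fin (M - 1), ((-fdMatrix M D h).map ofReal) i j * v j =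
      (D / h ^ 2 : ℝ) * (2 * (if (j : ℕ) + 1 = i + 1 then v j else 0) -
        (if (j : ℕ) + 1 = i + 2 then v j else 0) - (if (j : ℕ) + 1 = i then v j else 0)) := by
    intro j
    rw [map_apply, neg_apply, fdMatrix, of_apply]
    split_ifs <;> first | omega | push_cast; ring
  simp only [mulVec, dotProduct, hentry, ← mul_sum, sum_sub_distrib,
    sum_ite_val_add_one_eq_padZero]

theorem star_dotProduct_neg_fdMatrix_mulVec (M : ℕ) (D h : ℝ) (v : Fin (M - 1) → ℂ) :
    star v ⬝ᵥ ((-fdMatrix M D h).map ofReal *ᵥ v) =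
      (D / h ^ 2 * dirichletEnergy (M - 1 + 1) (padZero v) : ℝ) := by
  set V := padZero v
  have hV₀ : V 0 = 0 := padZero_eq_zero v (by omega)
  have hVM : V (M - 1 + 1) = 0 := padZero_eq_zero v (by omega)
  have hparts := sum_range_sub_mul_sub (M - 1 + 1) V (fun k => conj (V k))
    (by simp [hV₀]) (by simp [hVM])
  simp only [← map_sub, mul_conj] at hparts
  rw [sum_range_succ (fun k => (2 * V (k + 1) - V (k + 2) - V k) * conj (V (k + 1))), hVM,
    map_zero, mul_zero, add_zero,
    ← Fin.sum_univ_eq_sum_range (fun k => (2 * V (k + 1) - V (k + 2) - V k) * conj (V (k + 1)))]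
    at hparts
  rw [ofReal_mul, dirichletEnergy, ofReal_sum, hparts, mul_sum]
  refine sum_congr rfl fun i _ => ?_
  rw [neg_fdMatrix_mulVec_apply, Pi.star_apply, RCLike.star_def, ← padZero_val_add_one v i]
  ring

theorem star_dotProduct_diagonal_map_ofReal_mulVec {ι : Type*} [Fintype ι] [DecidableEq ι]
    (d : ι → ℝ) (v : ι → ℂ) :
    star v ⬝ᵥ ((diagonal d).map ofReal *ᵥ v) = (∑ i, d i * normSq (v i) : ℝ) := by
  rw [diagonal_map ofReal_zero, ofReal_sum]
  refine sum_congr rfl fun i _ => ?_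
  rw [mulVec_diagonal, Pi.star_apply, RCLike.star_def, ofReal_mul, ← mul_conj]
  ring

/-- With `A = (D/h²)·tridiag(1,−2,1)`, `B = ε·diag(1−2ξ_i)`, `υ_LB ≤ ξ_i ≤ υ_UB`,
every element `w` of `W₁(−A, B) = {⟨v, Bv⟩ : ⟨v, −Av⟩ = 1}` is real and there exists
`ℓ ∈ [(2D/h²)(1 + cos((M−1)π/M)), (2D/h²)(1 + cos(π/M))]` with
`(ε/ℓ)(1 − 2υ_UB) ≤ w ≤ (ε/ℓ)(1 − 2υ_LB)`. -/
theorem fov_fisher_kolmogorov_bounds (M : ℕ) (hM : 2 ≤ M)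
    (D h ε : ℝ) (hD : 0 < D) (hh : 0 < h) (hε : 0 < ε)
    (ξ : Fin (M - 1) → ℝ) (υLB υUB : ℝ)
    (hξ : ∀ i, υLB ≤ ξ i ∧ ξ i ≤ υUB)
    (v : Fin (M - 1) → ℂ)
    (hv : star v ⬝ᵥ (((-fdMatrix M D h).map Complex.ofReal).mulVec v) = 1) :
    ∃ w : ℝ,
      star v ⬝ᵥ
          (((Matrix.diagonal (fun i => ε * (1 - 2 * ξ i))).map Complex.ofReal).mulVec v) =
        (w : ℂ) ∧
      ∃ ℓ : ℝ,
        (2 * D / h ^ 2) * (1 + Real.cos (((M : ℝ) - 1) * Real.pi / (M : ℝ))) ≤ ℓ ∧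
        ℓ ≤ (2 * D / h ^ 2) * (1 + Real.cos (Real.pi / (M : ℝ))) ∧
        (ε / ℓ) * (1 - 2 * υUB) ≤ w ∧ w ≤ (ε / ℓ) * (1 - 2 * υLB) := by
  have hM₁ : M - 1 + 1 = M := by omega
  set s := ∑ i, normSq (v i)
  have hE : D / h ^ 2 * dirichletEnergy M (padZero v) = 1 := by
    rw [star_dotProduct_neg_fdMatrix_mulVec, hM₁] at hv
    exact_mod_cast hv
  have hlow := two_mul_one_sub_cos_mul_sum_le_dirichletEnergy (N := M) (V := padZero v)
    (padZero_eq_zero v (by omega)) (padZero_eq_zero v (by omega))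
  have hup := dirichletEnergy_le_two_mul_one_add_cos_mul_sum (N := M) (V := padZero v)
    (padZero_eq_zero v (by omega)) (padZero_eq_zero v (by omega))
  rw [sum_range_normSq_padZero v (by omega)] at hlow hup
  have hc : 0 < D / h ^ 2 := by positivity
  have hs : 0 < s := by
    have hE₀ : 0 < dirichletEnergy M (padZero v) := (pos_iff_pos_of_mul_pos (hE ▸ one_pos)).1 hc
    refine (sum_nonneg fun i _ => normSq_nonneg (v i)).lt_of_ne fun hs₀ => ?_
    rw [← hs₀, mul_zero] at hup
    linarith
  have hcos : Real.cos ((M - 1) * Real.pi / M) = -Real.cos (Real.pi / M) := by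
    rw [← Real.cos_pi_sub]
    congr 1
    field_simp
  refine ⟨_, star_dotProduct_diagonal_map_ofReal_mulVec _ v, 1 / s, ?_, ?_, ?_, ?_⟩
  · rw [hcos, le_div_iff₀ hs]
    linear_combination mul_le_mul_of_nonneg_left hlow hc.le + hE
  · rw [div_le_iff₀ hs]
    linear_combination mul_le_mul_of_nonneg_left hup hc.le - hE
  · rw [div_div_eq_mul_div, div_one, mul_right_comm, mul_sum]
    refine sum_le_sum fun i _ => mul_le_mul_of_nonneg_right ?_ (normSq_nonneg _)
    gcongr
    exact (hξ i).2
  · rw [div_div_eq_mul_div, div_one, mul_right_comm, mul_sum]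
    refine sum_le_sum fun i _ => mul_le_mul_of_nonneg_right ?_ (normSq_nonneg _)
    gcongr
    exact (hξ i).1
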